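/- For $p \ge 2$ and positive reals $M, \sigma$, the function $\Psi_p(M, \sigma^2) = M \cdot \sup\{ (p/s)(\sigma^2/(pM^2))^{1/s} : 2 \le s \le p \}$ satisfies $\Psi_p(M, \sigma^2) \le \max\{ \frac{1}{2}\sqrt{p}\,\sigma, \frac{1}{2e} p M \}$. -/

import Mathlib

noncomputable def Psi (p M V : ℝ) : ℝ :=
  M * sSup {y : ℝ | ∃ s : ℝ, 2 ≤ s ∧ s ≤ p ∧ y = p / s * (V / (p * M ^ 2)) ^ (1 / s)}

/-!
Put `a = σ² / (p M²)` and `u = 1/s ∈ (0, 1/2]`, so that `Psi = p M · sup u a^u`. Writing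
`a^u = exp (u log a)`, everything reduces to `y e^{-y} ≤ e^{-1}` at `y = 2u`: if `log a ≥ -2` then
`a^u ≤ √a · e^{1-2u}` (as `u ≤ 1/2`), giving the bound `√a / 2`; otherwise `a^u ≤ e^{-2u}`,
giving `1 / (2e)`.
-/

open Real

lemma mul_exp_neg_two_mul_le (u : ℝ) : u * exp (-2 * u) ≤ exp (-1) / 2 := by
  have := mul_exp_neg_le_exp_neg_one (2 * u)
  rw [neg_mul] at *
  linarith

lemma mul_rpow_le_max {a u : ℝ} (ha : 0 < a) (hu : 0 ≤ u) (hu2 : u ≤ 1 / 2) :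
    u * a ^ u ≤ max (√a / 2) (1 / (2 * exp 1)) := by
  rw [rpow_def_of_pos ha]
  have hu_exp := mul_exp_neg_two_mul_le u
  rcases le_or_gt (-2) (log a) with hlog | hlog
  · refine le_max_of_le_left ?_
    have hexp : exp (log a * u) ≤ √a * exp (1 - 2 * u) := by
      rw [sqrt_eq_rpow, rpow_def_of_pos ha, ← exp_add]
      exact exp_le_exp.2 (by nlinarith)
    calc u * exp (log a * u) ≤ u * (√a * exp (1 - 2 * u)) := by gcongr
      _ = √a * exp 1 * (u * exp (-2 * u)) := by rw [sub_eq_add_neg, exp_add]; ring_nf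
      _ ≤ √a * exp 1 * (exp (-1) / 2) := by gcongr
      _ = √a / 2 := by rw [exp_neg]; field_simp
  · refine le_max_of_le_right ?_
    calc u * exp (log a * u) ≤ u * exp (-2 * u) := by gcongr
      _ ≤ exp (-1) / 2 := hu_exp
      _ = 1 / (2 * exp 1) := by rw [exp_neg]; field_simp

lemma Psi_le_mul_max {p M V : ℝ} (hp : 0 < p) (hM : 0 < M) (hV : 0 < V) :
    Psi p M V ≤ M * (p * max (√(V / (p * M ^ 2)) / 2) (1 / (2 * exp 1))) := by
  have ha : 0 < V / (p * M ^ 2) := by positivity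
  refine mul_le_mul_of_nonneg_left (Real.sSup_le ?_ (by positivity)) hM.le
  rintro _ ⟨s, hs2, -, rfl⟩
  have hs : 0 < s := by linarith
  rw [div_eq_mul_one_div p s, mul_assoc]
  gcongr
  exact mul_rpow_le_max ha (by positivity) (by gcongr)

theorem psi_le_max (p M σ : ℝ) (hp : 2 ≤ p) (hM : 0 < M) (hσ : 0 < σ) :
    Psi p M (σ ^ 2) ≤ max (1 / 2 * Real.sqrt p * σ) (1 / (2 * Real.exp 1) * p * M) := by
  have hp0 : 0 < p := by linarith
  have hsqrt : √(σ ^ 2 / (p * M ^ 2)) = σ / (√p * M) := by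
    rw [sqrt_div' _ (by positivity), sqrt_sq hσ.le, sqrt_mul hp0.le, sqrt_sq hM.le]
  refine (Psi_le_mul_max hp0 hM (by positivity)).trans_eq ?_
  rw [hsqrt, mul_max_of_nonneg _ _ hp0.le, mul_max_of_nonneg _ _ hM.le]
  have : √p ≠ 0 := by positivity
  congr 1
  · field_simp
    rw [sq_sqrt hp0.le]
  · ring
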